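/- arXiv:2206.09205 — 5 statements merged into one kernel-verified Lean document; each statement's English description precedes it below -/
import Mathlib

section
/- Let X and X' be Banach spaces, A† : X → X' and A : X' → X bounded linear operators with A injective, and F : X → X' Fréchet differentiable at a point ā ∈ X with A∘F mapping X to X. Suppose there are nonnegative constants Y₀, Z₀, Z₁ and a function Z₂ : (0,∞) → (0,∞) such that ‖A F(ā)‖ ≤ Y₀, ‖I − A A†‖ ≤ Z₀, ‖A(A† − DF(ā))‖ ≤ Z₁, and ‖A(DF(c) − DF(ā))‖ ≤ Z₂(r)·r for all c in the closed ball of radius r around ā. If there exists r₀ > 0 with Z₂(r₀)r₀² − (1 − Z₁ − Z₀)r₀ + Y₀ < 0, then there exists a unique ã in the closed ball of radius r₀ around ā with F(ã) = 0. -/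
/-!
The Newton-like operator `T a = a - A (F a)` has derivative `I - A DF(c)`, which splits as
`(I - A A†) + A (A† - DF(ā)) + A (DF(ā) - DF(c))`; on `B_{r₀}(ā)` its norm is therefore at most
`κ = Z₀ + Z₁ + Z₂(r₀) r₀`, so `T` is `κ`-Lipschitz there by the mean value inequality. The radii
polynomial condition reads `κ r₀ + Y₀ < r₀`: it forces `κ < 1` and, since `‖T ā - ā‖ ≤ Y₀`, makes
`T` map the ball into itself. Banach's fixed point theorem gives a unique fixed point of `T` in the
ball, and by injectivity of `A` the fixed points of `T` are exactly the zeros of `F`.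
-/

open Metric Set Function

theorem LipschitzOnWith.existsUnique_isFixedPt_mem_closedBall {α : Type*} [MetricSpace α]
    [CompleteSpace α] {T : α → α} {K : NNReal} {a : α} {r : ℝ}
    (hT : LipschitzOnWith K T (closedBall a r)) (hK : K < 1) (hr : dist (T a) a + K * r ≤ r) :
    ∃! x, x ∈ closedBall a r ∧ IsFixedPt T x := by
  have ha : a ∈ closedBall a r := mem_closedBall_self <| by
    nlinarith [dist_nonneg (x := T a) (y := a), K.coe_nonneg, NNReal.coe_lt_one.2 hK]
  have hmaps : MapsTo T (closedBall a r) (closedBall a r) := fun x hx =>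
    calc dist (T x) a ≤ dist (T x) (T a) + dist (T a) a := dist_triangle _ _ _
      _ ≤ K * r + dist (T a) a := by
        gcongr
        exact (lipschitzOnWith_iff_dist_le_mul.1 hT x hx a ha).trans
          (by gcongr; exact mem_closedBall.1 hx)
      _ ≤ r := by linarith
  have hcontr : ContractingWith K (hmaps.restrict T _ _) := ⟨hK, hT.mapsToRestrict hmaps⟩
  obtain ⟨x, hx, hTx, -⟩ := hcontr.exists_fixedPoint' isClosed_closedBall.isComplete hmaps ha
    (edist_ne_top _ _)
  refine ⟨x, ⟨hx, hTx⟩, fun y ⟨hy, hTy⟩ => ?_⟩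
  have := (isClosed_closedBall (x := a) (ε := r)).completeSpace_coe
  exact congrArg Subtype.val (hcontr.fixedPoint_unique' (x := ⟨y, hy⟩) (y := ⟨x, hx⟩)
    (Subtype.ext hTy) (Subtype.ext hTx))

theorem ContinuousLinearMap.norm_id_sub_comp_le {𝕜 E F : Type*} [NontriviallyNormedField 𝕜]
    [NormedAddCommGroup E] [NormedSpace 𝕜 E] [NormedAddCommGroup F] [NormedSpace 𝕜 F]
    (A : F →L[𝕜] E) (A' D₀ D : E →L[𝕜] F) :
    ‖ContinuousLinearMap.id 𝕜 E - A.comp D‖ ≤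
      ‖ContinuousLinearMap.id 𝕜 E - A.comp A'‖ + ‖A.comp (A' - D₀)‖ + ‖A.comp (D - D₀)‖ := by
  have hsplit : ContinuousLinearMap.id 𝕜 E - A.comp D =
      (ContinuousLinearMap.id 𝕜 E - A.comp A') + A.comp (A' - D₀) - A.comp (D - D₀) := by
    simp only [ContinuousLinearMap.comp_sub]
    abel
  rw [hsplit]
  exact (norm_sub_le _ _).trans (by gcongr; exact norm_add_le _ _)

theorem lipschitzOnWith_sub_apply_comp {E F : Type*} [NormedAddCommGroup E] [NormedSpace ℝ E]
    [NormedAddCommGroup F] [NormedSpace ℝ F] {A : F →L[ℝ] E} {f : E → F} {f' : E → E →L[ℝ] F}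
    {s : Set E} {K : NNReal} (hs : Convex ℝ s) (hf : ∀ x ∈ s, HasFDerivAt f (f' x) x)
    (bound : ∀ x ∈ s, ‖ContinuousLinearMap.id ℝ E - A.comp (f' x)‖ ≤ K) :
    LipschitzOnWith K (fun x => x - A (f x)) s :=
  hs.lipschitzOnWith_of_nnnorm_hasFDerivWithin_le
    (fun x hx => ((hasFDerivAt_id x).sub (A.hasFDerivAt.comp x (hf x hx))).hasFDerivWithinAt)
    (fun x hx => NNReal.coe_le_coe.1 (bound x hx))

theorem newton_kantorovich_general
    {X X' : Type*} [NormedAddCommGroup X] [NormedSpace ℝ X] [CompleteSpace X]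
    [NormedAddCommGroup X'] [NormedSpace ℝ X']
    (Adag : X →L[ℝ] X') (A : X' →L[ℝ] X) (hA : Function.Injective A)
    (F : X → X') (DF : X → (X →L[ℝ] X')) (abar : X)
    (hFderiv : ∀ x : X, HasFDerivAt F (DF x) x)
    (Y₀ Z₀ Z₁ : ℝ) (Z₂ : ℝ → ℝ)
    (hY : ‖A (F abar)‖ ≤ Y₀)
    (hZ0 : ‖ContinuousLinearMap.id ℝ X - A.comp Adag‖ ≤ Z₀)
    (hZ1 : ‖A.comp (Adag - DF abar)‖ ≤ Z₁)
    (hZ2 : ∀ r > (0:ℝ), ∀ c ∈ closedBall abar r, ‖A.comp (DF c - DF abar)‖ ≤ Z₂ r * r)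
    (r₀ : ℝ) (hr₀ : 0 < r₀)
    (hp : Z₂ r₀ * r₀ ^ 2 - (1 - Z₁ - Z₀) * r₀ + Y₀ < 0) :
    ∃! atil : X, atil ∈ closedBall abar r₀ ∧ F atil = 0 := by
  set κ := Z₀ + Z₁ + Z₂ r₀ * r₀
  have hderiv : ∀ c ∈ closedBall abar r₀, ‖ContinuousLinearMap.id ℝ X - A.comp (DF c)‖ ≤ κ :=
    fun c hc => (A.norm_id_sub_comp_le Adag (DF abar) (DF c)).trans
      (add_le_add_three hZ0 hZ1 (hZ2 r₀ hr₀ c hc))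
  have hκ : 0 ≤ κ := (norm_nonneg _).trans (hderiv abar (mem_closedBall_self hr₀.le))
  have hκr : κ * r₀ + Y₀ < r₀ := by linear_combination hp
  have hκ1 : κ < 1 := by nlinarith [(norm_nonneg _).trans hY]
  have hT : LipschitzOnWith ⟨κ, hκ⟩ (fun x => x - A (F x)) (closedBall abar r₀) :=
    lipschitzOnWith_sub_apply_comp (convex_closedBall abar r₀) (fun x _ => hFderiv x) hderiv
  have hfix := hT.existsUnique_isFixedPt_mem_closedBall hκ1 (by
      rw [dist_eq_norm, sub_sub_cancel_left, norm_neg]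
      change ‖A (F abar)‖ + κ * r₀ ≤ r₀
      linarith)
  simpa only [IsFixedPt, sub_eq_self, map_eq_zero_iff A hA] using hfix

/-- Newton-Kantorovich type theorem (radii polynomial approach). -/
theorem newton_kantorovich
    {X X' : Type*} [NormedAddCommGroup X] [NormedSpace ℝ X] [CompleteSpace X]
    [NormedAddCommGroup X'] [NormedSpace ℝ X']
    (Adag : X →L[ℝ] X') (A : X' →L[ℝ] X) (hA : Function.Injective A)
    (F : X → X') (DF : X → (X →L[ℝ] X')) (abar : X)
    (hFderiv : ∀ x : X, HasFDerivAt F (DF x) x)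
    (Y₀ Z₀ Z₁ : ℝ) (Z₂ : ℝ → ℝ)
    (hY₀ : 0 ≤ Y₀) (hZ₀ : 0 ≤ Z₀) (hZ₁ : 0 ≤ Z₁) (hZ₂pos : ∀ r > (0:ℝ), 0 < Z₂ r)
    (hY : ‖A (F abar)‖ ≤ Y₀)
    (hZ0 : ‖ContinuousLinearMap.id ℝ X - A.comp Adag‖ ≤ Z₀)
    (hZ1 : ‖A.comp (Adag - DF abar)‖ ≤ Z₁)
    (hZ2 : ∀ r > (0:ℝ), ∀ c ∈ closedBall abar r, ‖A.comp (DF c - DF abar)‖ ≤ Z₂ r * r)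
    (r₀ : ℝ) (hr₀ : 0 < r₀)
    (hp : Z₂ r₀ * r₀ ^ 2 - (1 - Z₁ - Z₀) * r₀ + Y₀ < 0) :
    ∃! atil : X, atil ∈ closedBall abar r₀ ∧ F atil = 0 :=
  newton_kantorovich_general Adag A hA F DF abar hFderiv Y₀ Z₀ Z₁ Z₂ hY hZ0 hZ1 hZ2 r₀ hr₀ hp
end

section
/- Under the hypotheses of the Newton-Kantorovich theorem above, if p(r₀) < 0 for some r₀ > 0, then for every c in the closed ball B_{r₀}(ā) the operator A∘DF(c) satisfies ‖I − A DF(c)‖ < 1, and hence A∘DF(c) is invertible. -/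
open Metric

/-- Under the Newton-Kantorovich hypotheses, if `p r₀ < 0` then for every `c` in the
closed ball `B_{r₀}(ā)` one has `‖I - A ∘ DF c‖ < 1`, and hence `A ∘ DF c` is invertible. -/
theorem invertibility_of_A_DF
    {X X' : Type*} [NormedAddCommGroup X] [NormedSpace ℝ X] [CompleteSpace X]
    [NormedAddCommGroup X'] [NormedSpace ℝ X']
    (Adag : X →L[ℝ] X') (A : X' →L[ℝ] X) (hA : Function.Injective A)
    (F : X → X') (DF : X → (X →L[ℝ] X')) (abar : X)
    (hFderiv : ∀ x : X, HasFDerivAt F (DF x) x)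
    (Y₀ Z₀ Z₁ : ℝ) (Z₂ : ℝ → ℝ)
    (hY₀ : 0 ≤ Y₀) (hZ₀ : 0 ≤ Z₀) (hZ₁ : 0 ≤ Z₁) (hZ₂pos : ∀ r > (0:ℝ), 0 < Z₂ r)
    (hY : ‖A (F abar)‖ ≤ Y₀)
    (hZ0 : ‖ContinuousLinearMap.id ℝ X - A.comp Adag‖ ≤ Z₀)
    (hZ1 : ‖A.comp (Adag - DF abar)‖ ≤ Z₁)
    (hZ2 : ∀ r > (0:ℝ), ∀ c ∈ closedBall abar r, ‖A.comp (DF c - DF abar)‖ ≤ Z₂ r * r)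
    (r₀ : ℝ) (hr₀ : 0 < r₀)
    (hp : Z₂ r₀ * r₀ ^ 2 - (1 - Z₁ - Z₀) * r₀ + Y₀ < 0) :
    ∀ c ∈ closedBall abar r₀,
      ‖ContinuousLinearMap.id ℝ X - A.comp (DF c)‖ < 1 ∧ IsUnit (A.comp (DF c)) := by
  intro c hc
  have key : ‖ContinuousLinearMap.id ℝ X - A.comp (DF c)‖ < 1 := by
    have hdecomp : ContinuousLinearMap.id ℝ X - A.comp (DF c)
        = (ContinuousLinearMap.id ℝ X - A.comp Adag) + A.comp (Adag - DF abar)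
          - A.comp (DF c - DF abar) := by
      ext x
      simp [ContinuousLinearMap.comp_apply, ContinuousLinearMap.sub_apply,
        ContinuousLinearMap.add_apply, map_sub]
    have h2 := hZ2 r₀ hr₀ c hc
    have hsum : Z₀ + Z₁ + Z₂ r₀ * r₀ < 1 := by
      nlinarith [hZ₂pos r₀ hr₀]
    calc ‖ContinuousLinearMap.id ℝ X - A.comp (DF c)‖
        ≤ ‖ContinuousLinearMap.id ℝ X - A.comp Adag‖ + ‖A.comp (Adag - DF abar)‖
          + ‖A.comp (DF c - DF abar)‖ := by
          rw [hdecomp]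
          exact le_trans (norm_sub_le _ _) (by gcongr; exact norm_add_le _ _)
      _ ≤ Z₀ + Z₁ + Z₂ r₀ * r₀ := by gcongr
      _ < 1 := hsum
  refine ⟨key, ?_⟩
  have h1 : ‖(1 : X →L[ℝ] X) - A.comp (DF c)‖ < 1 := key
  have := (Units.oneSub ((1 : X →L[ℝ] X) - A.comp (DF c)) h1).isUnit
  simpa using this
end

section
/- Let Γ : ℓ¹_ν → ℓ¹_ν be the block operator equal to an m×m matrix Γ^(m) on indices 0,…,m−1 and to multiplication by scalars μ_n on indices n ≥ m, where |μ_n| ≤ |μ_m| for all n ≥ m. Then Γ is bounded and ‖Γ‖_{B(ℓ¹_ν)} = max(K, |μ_m|), where K = max_{0≤j≤m−1} (1/ω_j) ∑_{i=0}^{m−1} |Γ^(m)_{i,j}| ω_i, with ω₀ = 1 and ω_k = 2ν^k for k ≥ 1. -/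
/-- Membership in `ℓ¹_ν`. -/
def memL1 (ν : ℝ) (a : ℕ → ℝ) : Prop := Summable (fun k : ℕ => |a k| * ν ^ k)

/-- The weighted `ℓ¹_ν` norm `‖a‖ = |a₀| + 2∑_{k≥1}|a_k|ν^k`. -/
noncomputable def wnorm (ν : ℝ) (a : ℕ → ℝ) : ℝ :=
  |a 0| + 2 * ∑' k : ℕ, |a (k + 1)| * ν ^ (k + 1)

/-- The weights `ω₀ = 1`, `ω_k = 2ν^k` for `k ≥ 1`. -/
noncomputable def wt (ν : ℝ) (k : ℕ) : ℝ := if k = 0 then 1 else 2 * ν ^ k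

/-- The block operator: the `m×m` matrix `Γ^(m)` on indices `0,…,m−1` and multiplication
by the scalars `μ_n` on indices `n ≥ m`. -/
noncomputable def blockApply (m : ℕ) (Γm : Fin m → Fin m → ℝ) (μ : ℕ → ℝ)
    (b : ℕ → ℝ) (k : ℕ) : ℝ :=
  if h : k < m then ∑ i : Fin m, Γm ⟨k, h⟩ i * b i else μ k * b k

lemma wt_pos {ν : ℝ} (hν : 1 ≤ ν) (k : ℕ) : 0 < wt ν k := by
  have h0 : (0:ℝ) < ν := by linarith
  unfold wt; split <;> positivity

lemma wt_le {ν : ℝ} (hν : 1 ≤ ν) (k : ℕ) : wt ν k ≤ 2 * ν ^ k := by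
  have h1 : (1:ℝ) ≤ ν ^ k := one_le_pow₀ hν
  unfold wt; split
  · linarith
  · exact le_refl _

lemma memL1_wt {ν : ℝ} {b : ℕ → ℝ} (hν : 1 ≤ ν) (hb : memL1 ν b) :
    Summable (fun k => |b k| * wt ν k) := by
  have h0 : (0:ℝ) < ν := by linarith
  refine Summable.of_nonneg_of_le
    (fun k => mul_nonneg (abs_nonneg _) (wt_pos hν k).le) (fun k => ?_)
    (hb.mul_left 2)
  calc |b k| * wt ν k ≤ |b k| * (2 * ν ^ k) :=
        mul_le_mul_of_nonneg_left (wt_le hν k) (abs_nonneg _)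
    _ = 2 * (|b k| * ν ^ k) := by ring

lemma wnorm_eq_tsum {ν : ℝ} {b : ℕ → ℝ} (hν : 1 ≤ ν) (hb : memL1 ν b) :
    wnorm ν b = ∑' k, |b k| * wt ν k := by
  rw [Summable.tsum_eq_zero_add (memL1_wt hν hb)]
  unfold wnorm
  have : ∀ n : ℕ, |b (n + 1)| * wt ν (n + 1) = 2 * (|b (n + 1)| * ν ^ (n + 1)) := by
    intro n; simp [wt]; ring
  rw [tsum_congr this, tsum_mul_left]
  simp [wt]


set_option maxHeartbeats 1000000

/-- Operator norm of a block operator on `ℓ¹_ν`: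
`‖Γ‖ = max(K, |μ_m|)` with `K = max_j (1/ω_j) ∑_i |Γ^(m)_{i,j}| ω_i`. -/
theorem blockOperatorNorm (ν : ℝ) (hν : 1 ≤ ν) (m : ℕ) (hm : 0 < m)
    (Γm : Fin m → Fin m → ℝ) (μ : ℕ → ℝ)
    (hμ : ∀ n : ℕ, m ≤ n → |μ n| ≤ |μ m|) :
    (∀ b : ℕ → ℝ, memL1 ν b → memL1 ν (blockApply m Γm μ b)) ∧
    sInf {C : ℝ | 0 ≤ C ∧ ∀ b : ℕ → ℝ, memL1 ν b →
        wnorm ν (blockApply m Γm μ b) ≤ C * wnorm ν b}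
      = max (⨆ j : Fin m, (∑ i : Fin m, |Γm i j| * wt ν i) / wt ν j) |μ m| := by
  have h0 : (0:ℝ) < ν := by linarith
  -- Part 1: boundedness (membership)
  have hmem : ∀ b : ℕ → ℝ, memL1 ν b → memL1 ν (blockApply m Γm μ b) := by
    intro b hb
    unfold memL1 at hb ⊢
    rw [← summable_nat_add_iff m]
    refine Summable.of_nonneg_of_le (fun k => by positivity) (fun k => ?_)
      (((summable_nat_add_iff (f := fun k => |b k| * ν ^ k) m).2 hb).mul_left |μ m|)
    have hk : ¬ (k + m < m) := by omega
    simp only [blockApply, dif_neg hk, abs_mul]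
    rw [mul_assoc]
    exact mul_le_mul_of_nonneg_right (hμ (k + m) (by omega)) (by positivity)
  refine ⟨hmem, ?_⟩
  haveI : Nonempty (Fin m) := ⟨⟨0, hm⟩⟩
  set K := ⨆ j : Fin m, (∑ i : Fin m, |Γm i j| * wt ν i) / wt ν j with hKdef
  have hbdd : BddAbove (Set.range fun j : Fin m =>
      (∑ i : Fin m, |Γm i j| * wt ν i) / wt ν j) :=
    Set.Finite.bddAbove (Set.finite_range _)
  have hcol : ∀ i : Fin m, ∑ k : Fin m, |Γm k i| * wt ν k ≤ K * wt ν i := by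
    intro i
    have h1 : (∑ k : Fin m, |Γm k i| * wt ν k) / wt ν i ≤ K := le_ciSup hbdd i
    rwa [div_le_iff₀ (wt_pos hν i)] at h1
  set CC := max K |μ m| with hCCdef
  have hCCmem : CC ∈ {C : ℝ | 0 ≤ C ∧ ∀ b : ℕ → ℝ, memL1 ν b →
      wnorm ν (blockApply m Γm μ b) ≤ C * wnorm ν b} := by
    refine ⟨le_trans (abs_nonneg _) (le_max_right _ _), ?_⟩
    intro b hb
    have hb' := memL1_wt hν hb
    have hg' := memL1_wt hν (hmem b hb)
    rw [wnorm_eq_tsum hν hb, wnorm_eq_tsum hν (hmem b hb),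
      ← Summable.sum_add_tsum_nat_add m hg', ← Summable.sum_add_tsum_nat_add m hb']
    have hhead : ∑ k ∈ Finset.range m, |blockApply m Γm μ b k| * wt ν k
        ≤ K * ∑ k ∈ Finset.range m, |b k| * wt ν k := by
      rw [← Fin.sum_univ_eq_sum_range, ← Fin.sum_univ_eq_sum_range]
      calc ∑ k : Fin m, |blockApply m Γm μ b ↑k| * wt ν ↑k
          ≤ ∑ k : Fin m, (∑ i : Fin m, |Γm k i| * |b ↑i|) * wt ν (k : ℕ) := by
            refine Finset.sum_le_sum fun k _ => ?_
            refine mul_le_mul_of_nonneg_right ?_ (wt_pos hν _).le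
            simp only [blockApply, dif_pos k.isLt, Fin.eta]
            calc |∑ i : Fin m, Γm k i * b ↑i| ≤ ∑ i : Fin m, |Γm k i * b ↑i| :=
                  Finset.abs_sum_le_sum_abs _ _
              _ = ∑ i : Fin m, |Γm k i| * |b ↑i| := by simp [abs_mul]
        _ = ∑ i : Fin m, |b ↑i| * ∑ k : Fin m, |Γm k i| * wt ν ↑k := by
            simp_rw [Finset.sum_mul]
            rw [Finset.sum_comm]
            refine Finset.sum_congr rfl fun i _ => ?_
            rw [Finset.mul_sum]
            exact Finset.sum_congr rfl fun k _ => by ring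
        _ ≤ ∑ i : Fin m, |b ↑i| * (K * wt ν ↑i) :=
            Finset.sum_le_sum fun i _ =>
              mul_le_mul_of_nonneg_left (hcol i) (abs_nonneg _)
        _ = K * ∑ i : Fin m, |b ↑i| * wt ν ↑i := by
            rw [Finset.mul_sum]; exact Finset.sum_congr rfl fun i _ => by ring
    have htail : ∑' k : ℕ, |blockApply m Γm μ b (k + m)| * wt ν (k + m)
        ≤ |μ m| * ∑' k : ℕ, |b (k + m)| * wt ν (k + m) := by
      rw [← tsum_mul_left]
      refine Summable.tsum_le_tsum (fun k => ?_)
        ((summable_nat_add_iff (f := fun k => |blockApply m Γm μ b k| * wt ν k) m).2 hg')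
        (((summable_nat_add_iff (f := fun k => |b k| * wt ν k) m).2 hb').mul_left _)
      have hk : ¬ (k + m < m) := by omega
      simp only [blockApply, dif_neg hk, abs_mul]
      rw [mul_assoc]
      exact mul_le_mul_of_nonneg_right (hμ _ (by omega))
        (mul_nonneg (abs_nonneg _) (wt_pos hν _).le)
    have hA : 0 ≤ ∑ k ∈ Finset.range m, |b k| * wt ν k :=
      Finset.sum_nonneg fun k _ => mul_nonneg (abs_nonneg _) (wt_pos hν k).le
    have hB : 0 ≤ ∑' k : ℕ, |b (k + m)| * wt ν (k + m) :=
      tsum_nonneg fun k => mul_nonneg (abs_nonneg _) (wt_pos hν _).le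
    have h1 : K ≤ CC := le_max_left _ _
    have h2 : |μ m| ≤ CC := le_max_right _ _
    calc ∑ k ∈ Finset.range m, |blockApply m Γm μ b k| * wt ν k
          + ∑' k : ℕ, |blockApply m Γm μ b (k + m)| * wt ν (k + m)
        ≤ K * (∑ k ∈ Finset.range m, |b k| * wt ν k)
          + |μ m| * ∑' k : ℕ, |b (k + m)| * wt ν (k + m) := add_le_add hhead htail
      _ ≤ CC * (∑ k ∈ Finset.range m, |b k| * wt ν k)
          + CC * ∑' k : ℕ, |b (k + m)| * wt ν (k + m) :=
          add_le_add (mul_le_mul_of_nonneg_right h1 hA) (mul_le_mul_of_nonneg_right h2 hB)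
      _ = CC * ((∑ k ∈ Finset.range m, |b k| * wt ν k)
          + ∑' k : ℕ, |b (k + m)| * wt ν (k + m)) := by ring
  refine le_antisymm (csInf_le ⟨0, fun C hC => hC.1⟩ hCCmem) ?_
  refine le_csInf ⟨CC, hCCmem⟩ ?_
  rintro C ⟨hC0, hCb⟩
  refine max_le ?_ ?_
  · -- K ≤ C
    refine ciSup_le fun j => ?_
    set e : ℕ → ℝ := fun k => if k = (j : ℕ) then 1 else 0 with he_def
    have hee : memL1 ν e := by
      refine summable_of_ne_finset_zero (s := {(j : ℕ)}) fun k hk => ?_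
      simp only [Finset.mem_singleton] at hk
      simp [he_def, hk]
    have hwe : wnorm ν e = wt ν j := by
      rw [wnorm_eq_tsum hν hee]
      have : (fun k => |e k| * wt ν k) = fun k => if k = (j : ℕ) then wt ν ↑j else 0 := by
        funext k; by_cases h : k = (j : ℕ) <;> simp [he_def, h]
      rw [this, tsum_ite_eq]
    have hge : wnorm ν (blockApply m Γm μ e) = ∑ i : Fin m, |Γm i j| * wt ν ↑i := by
      rw [wnorm_eq_tsum hν (hmem e hee)]
      rw [tsum_eq_sum (s := Finset.range m) ?_]
      · rw [← Fin.sum_univ_eq_sum_range]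
        refine Finset.sum_congr rfl fun k _ => ?_
        congr 1
        simp only [blockApply, dif_pos k.isLt, Fin.eta]
        have : ∑ i : Fin m, Γm k i * e ↑i = Γm k j := by
          rw [Finset.sum_eq_single j]
          · simp [he_def]
          · intro i _ hij
            have : (i : ℕ) ≠ (j : ℕ) := fun h => hij (Fin.val_injective h)
            simp [he_def, this]
          · intro h; exact absurd (Finset.mem_univ j) h
        rw [this]
      · intro k hk
        have hk' : ¬ k < m := by simpa using hk
        have hkj : k ≠ (j : ℕ) := by
          have := j.isLt; omega
        simp [blockApply, dif_neg hk', he_def, hkj]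
    have hle := hCb e hee
    rw [hwe, hge] at hle
    rw [div_le_iff₀ (wt_pos hν j)]
    exact hle
  · -- |μ m| ≤ C
    set e : ℕ → ℝ := fun k => if k = m then 1 else 0 with he_def
    have hee : memL1 ν e := by
      refine summable_of_ne_finset_zero (s := {m}) fun k hk => ?_
      simp only [Finset.mem_singleton] at hk
      simp [he_def, hk]
    have hwe : wnorm ν e = wt ν m := by
      rw [wnorm_eq_tsum hν hee]
      have : (fun k => |e k| * wt ν k) = fun k => if k = m then wt ν m else 0 := by
        funext k; by_cases h : k = m <;> simp [he_def, h]
      rw [this, tsum_ite_eq]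
    have hge : wnorm ν (blockApply m Γm μ e) = |μ m| * wt ν m := by
      rw [wnorm_eq_tsum hν (hmem e hee)]
      have : (fun k => |blockApply m Γm μ e k| * wt ν k)
          = fun k => if k = m then |μ m| * wt ν m else 0 := by
        funext k
        by_cases hkm : k = m
        · subst hkm
          have hk' : ¬ k < k := lt_irrefl k
          simp [blockApply, hk', he_def]
        · by_cases hk : k < m
          · rw [if_neg hkm]
            simp only [blockApply, dif_pos hk]
            have : ∑ i : Fin m, Γm ⟨k, hk⟩ i * e ↑i = 0 :=
              Finset.sum_eq_zero fun i _ => by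
                have : (i : ℕ) ≠ m := Nat.ne_of_lt i.isLt
                simp [he_def, this]
            simp [this]
          · rw [if_neg hkm]
            simp [blockApply, dif_neg hk, he_def, hkm]
      rw [this, tsum_ite_eq]
    have hle := hCb e hee
    rw [hwe, hge] at hle
    exact le_of_mul_le_mul_right hle (wt_pos hν m)
end

section
/- Let b ∈ ℓ¹_ν (extended symmetrically to negative indices) and define Q_k(b) = max(|b_k|, sup_{k'≥1} |b_{|k−k'|} + b_{|k+k'|}|/(2ν^{k'})). Then for every v ∈ ℓ¹_ν with ‖v‖_{1,ν} ≤ 1 and every k ≥ 0, |(b ∗ v)_k| ≤ Q_k(b). -/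
/-!
Since `v` is extended evenly, the terms `k'` and `-k'` of the convolution sum pair up to
`v_{k'} (b_{|k-k'|} + b_{k+k'})`, so `(b ∗ v)_k = v₀ c₀ + ∑_{k'≥1} v_{k'} c_{k'}` with
`c₀ = b_k` and `c_{k'} = b_{|k-k'|} + b_{k+k'}`. Because of the factor `2` in `‖·‖_{1,ν}`, the
dual norm of `c` is `max(|c₀|, sup_{k'≥1} |c_{k'}| / (2ν^{k'}))`, which is exactly `Q_k(b)`.
-/

open Set

/-- Symmetrized discrete convolution `(b∗v)_k = ∑_{k'∈ℤ} v_{|k'|} b_{|k−k'|}`. -/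
noncomputable def conv (b v : ℕ → ℝ) (k : ℕ) : ℝ :=
  ∑' j : ℤ, v j.natAbs * b ((k : ℤ) - j).natAbs

/-- The bound `Q_k(b) = max(|b_k|, sup_{k'≥1} |b_{|k−k'|} + b_{|k+k'|}|/(2ν^{k'}))`. -/
noncomputable def Qbound (ν : ℝ) (b : ℕ → ℝ) (k : ℕ) : ℝ :=
  max |b k| (⨆ k' : ℕ, |b ((k : ℤ) - (k' + 1)).natAbs + b (k + (k' + 1))| / (2 * ν ^ (k' + 1)))

theorem tsum_int_eq_zero_add_tsum_add_neg {G : Type*} [AddCommGroup G] [UniformSpace G]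
    [IsUniformAddGroup G] [CompleteSpace G] [T2Space G] {f : ℤ → G} (hf : Summable f) :
    ∑' j : ℤ, f j = f 0 + ∑' n : ℕ, (f (n + 1) + f (-(n + 1))) := by
  have hpos : Summable fun n : ℕ => f (n + 1) :=
    hf.comp_injective fun _ _ h => by simpa using h
  have hneg : Summable fun n : ℕ => f (-(n + 1)) :=
    hf.comp_injective fun _ _ h => by simpa using h
  rw [tsum_of_add_one_of_neg_add_one hpos hneg, hpos.tsum_add hneg]
  abel

theorem Summable.comp_natAbs {G : Type*} [AddCommGroup G] [TopologicalSpace G]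
    [IsTopologicalAddGroup G] {g : ℕ → G} (hg : Summable g) :
    Summable fun j : ℤ => g j.natAbs :=
  .of_nat_of_neg (by simpa using hg) (by simpa using hg)

namespace memL1

variable {ν : ℝ} {a : ℕ → ℝ}

theorem abs_le_tsum (ha : memL1 ν a) (hν : 1 ≤ ν) (n : ℕ) :
    |a n| ≤ ∑' k, |a k| * ν ^ k :=
  calc |a n| ≤ |a n| * ν ^ n := le_mul_of_one_le_right (abs_nonneg _) (one_le_pow₀ hν)
    _ ≤ ∑' k, |a k| * ν ^ k :=
      ha.le_tsum n fun k _ => mul_nonneg (abs_nonneg _) (pow_nonneg (zero_le_one.trans hν) k)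

theorem summable_abs (ha : memL1 ν a) (hν : 1 ≤ ν) : Summable fun n => |a n| :=
  .of_nonneg_of_le (fun _ => abs_nonneg _)
    (fun _ => le_mul_of_one_le_right (abs_nonneg _) (one_le_pow₀ hν)) ha

theorem abs_pairing_le_wnorm_mul (ha : memL1 ν a) {c₀ M : ℝ} {c : ℕ → ℝ}
    (hc₀ : |c₀| ≤ M) (hc : ∀ n, |c n| ≤ 2 * ν ^ (n + 1) * M) :
    |a 0 * c₀ + ∑' n, a (n + 1) * c n| ≤ wnorm ν a * M := by
  have hM : 0 ≤ M := (abs_nonneg _).trans hc₀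
  have hterm (n : ℕ) : |a (n + 1) * c n| ≤ |a (n + 1)| * ν ^ (n + 1) * (2 * M) := by
    rw [abs_mul]
    nlinarith [mul_le_mul_of_nonneg_left (hc n) (abs_nonneg (a (n + 1)))]
  have hmaj : Summable fun n => |a (n + 1)| * ν ^ (n + 1) * (2 * M) :=
    ((summable_nat_add_iff 1).2 ha).mul_right _
  have htail : |∑' n, a (n + 1) * c n| ≤ ∑' n, |a (n + 1)| * ν ^ (n + 1) * (2 * M) :=
    tsum_of_norm_bounded (f := fun n => a (n + 1) * c n) hmaj.hasSum hterm
  calc |a 0 * c₀ + ∑' n, a (n + 1) * c n|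
      ≤ |a 0| * M + ∑' n, |a (n + 1)| * ν ^ (n + 1) * (2 * M) := by
        refine (abs_add_le _ _).trans (add_le_add ?_ htail)
        rw [abs_mul]
        exact mul_le_mul_of_nonneg_left hc₀ (abs_nonneg _)
    _ = wnorm ν a * M := by rw [tsum_mul_right, wnorm]; ring

end memL1

section Qbound

variable {ν : ℝ} {b : ℕ → ℝ} {B : ℝ}

theorem abs_le_Qbound (k : ℕ) : |b k| ≤ Qbound ν b k := le_max_left _ _

theorem bddAbove_Qbound_range (hν : 1 ≤ ν) (hb : ∀ n, |b n| ≤ B) (k : ℕ) :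
    BddAbove (range fun k' : ℕ =>
      |b ((k : ℤ) - (k' + 1)).natAbs + b (k + (k' + 1))| / (2 * ν ^ (k' + 1))) := by
  refine ⟨B, ?_⟩
  rintro _ ⟨n, rfl⟩
  have hν' : 1 ≤ ν ^ (n + 1) := one_le_pow₀ hν
  rw [div_le_iff₀ (by positivity)]
  calc |b ((k : ℤ) - (n + 1)).natAbs + b (k + (n + 1))|
      ≤ B + B := (abs_add_le _ _).trans (add_le_add (hb _) (hb _))
    _ ≤ B * (2 * ν ^ (n + 1)) := by nlinarith [(abs_nonneg (b 0)).trans (hb 0)]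

theorem abs_add_le_Qbound (hν : 1 ≤ ν) (hb : ∀ n, |b n| ≤ B) (k n : ℕ) :
    |b ((k : ℤ) - (n + 1)).natAbs + b (k + (n + 1))| ≤ 2 * ν ^ (n + 1) * Qbound ν b k := by
  have hpos : 0 < 2 * ν ^ (n + 1) := by positivity
  rw [← div_le_iff₀' hpos]
  exact (le_ciSup (bddAbove_Qbound_range hν hb k) n).trans (le_max_right _ _)

end Qbound

theorem summable_conv_terms {b v : ℕ → ℝ} {B : ℝ} (hv : Summable fun n => |v n|)
    (hb : ∀ n, |b n| ≤ B) (k : ℕ) :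
    Summable fun j : ℤ => v j.natAbs * b ((k : ℤ) - j).natAbs :=
  (hv.comp_natAbs.mul_right B).of_norm_bounded fun j => by
    rw [Real.norm_eq_abs, abs_mul]
    exact mul_le_mul_of_nonneg_left (hb _) (abs_nonneg _)

theorem conv_eq_pairing {b v : ℕ → ℝ} {k : ℕ}
    (h : Summable fun j : ℤ => v j.natAbs * b ((k : ℤ) - j).natAbs) :
    conv b v k = v 0 * b k +
      ∑' n : ℕ, v (n + 1) * (b ((k : ℤ) - (n + 1)).natAbs + b (k + (n + 1))) := by
  rw [conv, tsum_int_eq_zero_add_tsum_add_neg h]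
  congr 2
  funext n
  have hpos : ((n : ℤ) + 1).natAbs = n + 1 := by omega
  have hneg : (-((n : ℤ) + 1)).natAbs = n + 1 := by omega
  have hsub : ((k : ℤ) - -((n : ℤ) + 1)).natAbs = k + (n + 1) := by omega
  rw [hpos, hneg, hsub, mul_add]

/-- For `‖v‖_{1,ν} ≤ 1` we have `|(b ∗ v)_k| ≤ Q_k(b)` for every `k ≥ 0`. -/
theorem conv_Q_bound (ν : ℝ) (hν : 1 ≤ ν) (b v : ℕ → ℝ)
    (hb : memL1 ν b) (hv : memL1 ν v) (hv1 : wnorm ν v ≤ 1) :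
    ∀ k : ℕ, |conv b v k| ≤ Qbound ν b k := by
  intro k
  have hbB := hb.abs_le_tsum hν
  rw [conv_eq_pairing (summable_conv_terms (hv.summable_abs hν) hbB k)]
  calc _ ≤ wnorm ν v * Qbound ν b k :=
        hv.abs_pairing_le_wnorm_mul (abs_le_Qbound k) (abs_add_le_Qbound hν hbB k)
    _ ≤ Qbound ν b k :=
        mul_le_of_le_one_left ((abs_nonneg _).trans (abs_le_Qbound k)) hv1
end

section
/- Let b ∈ ℓ¹_ν and let v ∈ ℓ¹_ν with ‖v‖_{1,ν} ≤ 1; define the tail v̂ by v̂_k = 0 for k < m and v̂_k = v_k for k ≥ m. Then for every k ≥ 0, |(b ∗ v̂)_k| ≤ sup_{k'≥m} |b_{|k−k'|} + b_{|k+k'|}|/(2ν^{k'}). -/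
/-- The tail `v̂` of `v`: `v̂_k = 0` for `k < m` and `v̂_k = v_k` for `k ≥ m`. -/
def tailSeq (m : ℕ) (v : ℕ → ℝ) (k : ℕ) : ℝ := if k < m then 0 else v k

/-- For `‖v‖_{1,ν} ≤ 1`, `|(b ∗ v̂)_k| ≤ sup_{k'≥m} |b_{|k−k'|} + b_{|k+k'|}|/(2ν^{k'})`. -/
theorem conv_tail_Q_bound (ν : ℝ) (hν : 1 ≤ ν) (m : ℕ) (hm : 1 ≤ m) (b v : ℕ → ℝ)
    (hb : memL1 ν b) (hv : memL1 ν v) (hv1 : wnorm ν v ≤ 1) :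
    ∀ k : ℕ, |conv b (tailSeq m v) k| ≤
      ⨆ k' : ℕ, |b ((k : ℤ) - (m + k')).natAbs + b (k + (m + k'))| / (2 * ν ^ (m + k')) := by
  intro k
  have hν0 : (0 : ℝ) < ν := lt_of_lt_of_le one_pos hν
  have hp : ∀ n : ℕ, (1 : ℝ) ≤ ν ^ n := fun n => one_le_pow₀ hν
  have hp0 : ∀ n : ℕ, (0 : ℝ) < ν ^ n := fun n => lt_of_lt_of_le one_pos (hp n)
  -- bound on |b|
  set C : ℝ := ∑' j : ℕ, |b j| * ν ^ j with hC
  have hbC : ∀ n : ℕ, |b n| ≤ C := by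
    intro n
    calc |b n| = |b n| * 1 := (mul_one _).symm
      _ ≤ |b n| * ν ^ n := by
          exact mul_le_mul_of_nonneg_left (hp n) (abs_nonneg _)
      _ ≤ C := Summable.le_tsum hb n (fun j _ => mul_nonneg (abs_nonneg _) (le_of_lt (hp0 j)))
  -- the sup term
  set T : ℕ → ℝ := fun k' =>
    |b ((k : ℤ) - (m + k')).natAbs + b (k + (m + k'))| / (2 * ν ^ (m + k')) with hT
  have hTnn : ∀ k', 0 ≤ T k' := fun k' =>
    div_nonneg (abs_nonneg _) (by positivity)
  have hTbdd : BddAbove (Set.range T) := by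
    refine ⟨C, ?_⟩
    rintro x ⟨k', rfl⟩
    have h1 : |b ((k : ℤ) - (m + k')).natAbs + b (k + (m + k'))| ≤ C + C := by
      calc |b ((k : ℤ) - (m + k')).natAbs + b (k + (m + k'))|
          ≤ |b ((k : ℤ) - (m + k')).natAbs| + |b (k + (m + k'))| := abs_add_le _ _
        _ ≤ C + C := add_le_add (hbC _) (hbC _)
    have h2 : (2 : ℝ) ≤ 2 * ν ^ (m + k') := by
      nlinarith [hp (m + k')]
    have hCnn : 0 ≤ C := le_trans (abs_nonneg (b 0)) (hbC 0)
    calc T k' ≤ (C + C) / 2 := by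
          exact div_le_div₀ (by linarith) h1 two_pos h2
      _ = C := by ring
  set Q : ℝ := ⨆ k', T k' with hQ
  have hQnn : 0 ≤ Q := le_trans (hTnn 0) (le_ciSup hTbdd 0)
  -- summability of v-related sequences
  have hsv : Summable fun n : ℕ => |v n| := by
    refine Summable.of_nonneg_of_le (fun n => abs_nonneg _) (fun n => ?_) hv
    exact le_mul_of_one_le_right (abs_nonneg _) (hp n)
  -- the ℤ-indexed function
  set f : ℤ → ℝ := fun j => tailSeq m v j.natAbs * b ((k : ℤ) - j).natAbs with hfdef
  have habs : ∀ j : ℤ, |f j| ≤ |v j.natAbs| * C := by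
    intro j
    rw [abs_mul]
    have : |tailSeq m v j.natAbs| ≤ |v j.natAbs| := by
      unfold tailSeq; split <;> simp [abs_nonneg]
    exact mul_le_mul this (hbC _) (abs_nonneg _) (abs_nonneg _)
  have hf : Summable f := by
    apply Summable.of_nat_of_neg_add_one
    · refine Summable.of_abs (Summable.of_nonneg_of_le (fun n => abs_nonneg _)
        (fun n => ?_) (hsv.mul_right C))
      exact habs n
    · refine Summable.of_abs (Summable.of_nonneg_of_le (fun n => abs_nonneg _)
        (fun n => ?_) (((summable_nat_add_iff 1).mpr hsv).mul_right C))
      have h := habs (-((n : ℤ) + 1))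
      have hn : ((-((n : ℤ) + 1)).natAbs) = n + 1 := by omega
      rw [hn] at h
      exact h
  -- pair the sum
  set g : ℕ → ℝ := fun n => f n + f (-n) with hgdef
  have hg : Summable g := hf.nat_add_neg
  have hf0 : f 0 = 0 := by
    simp [hfdef, tailSeq, Nat.lt_of_lt_of_le Nat.zero_lt_one hm]
  have hconv : conv b (tailSeq m v) k = ∑' n : ℕ, g n := by
    rw [tsum_nat_add_neg hf, hf0, add_zero]; rfl
  have hgform : ∀ n : ℕ, g n =
      tailSeq m v n * (b ((k : ℤ) - n).natAbs + b (k + n)) := by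
    intro n
    have h1 : ((n : ℤ)).natAbs = n := Int.natAbs_natCast n
    have h2 : ((-n : ℤ)).natAbs = n := by simp
    have h3 : (((k : ℤ) - (-n : ℤ))).natAbs = k + n := by
      rw [sub_neg_eq_add, ← Nat.cast_add, Int.natAbs_natCast]
    simp only [hgdef, hfdef, h1, h2, h3]
    ring
  -- the comparison sequence
  set h' : ℕ → ℝ := fun n => if n < m then 0 else 2 * |v n| * ν ^ n with hh'
  have h'lt : ∀ n, n < m → h' n = 0 := by
    intro n hn; simp only [hh']; exact if_pos hn
  have h'ge : ∀ n, ¬ n < m → h' n = 2 * |v n| * ν ^ n := by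
    intro n hn; simp only [hh']; exact if_neg hn
  have h'nn : ∀ n, 0 ≤ h' n := by
    intro n
    by_cases hc : n < m
    · rw [h'lt n hc]
    · rw [h'ge n hc]; positivity
  have h'le : ∀ n, h' n ≤ 2 * (|v n| * ν ^ n) := by
    intro n
    by_cases hc : n < m
    · rw [h'lt n hc]; positivity
    · rw [h'ge n hc, mul_assoc]
  have hsh' : Summable h' :=
    Summable.of_nonneg_of_le h'nn h'le (hv.mul_left 2)
  -- pointwise bound |g n| ≤ Q * h' n
  have hpt : ∀ n : ℕ, |g n| ≤ Q * h' n := by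
    intro n
    by_cases hnm : n < m
    · rw [hgform n, h'lt n hnm]
      simp [tailSeq, hnm]
    · push_neg at hnm
      have hmn : m + (n - m) = n := by omega
      have hsup : |b ((k : ℤ) - n).natAbs + b (k + n)| / (2 * ν ^ n) ≤ Q := by
        have := le_ciSup hTbdd (n - m)
        rw [hT] at this
        simp only [hmn] at this
        rw [show ((m : ℤ) + (n - m : ℕ)) = (n : ℤ) by omega] at this
        exact this
      have hB : |b ((k : ℤ) - n).natAbs + b (k + n)| ≤ Q * (2 * ν ^ n) := by
        rw [div_le_iff₀ (by positivity)] at hsup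
        exact hsup
      rw [h'ge n (Nat.not_lt.mpr hnm), hgform n, abs_mul]
      have htv : |tailSeq m v n| = |v n| := by
        simp [tailSeq, Nat.not_lt.mpr hnm]
      rw [htv]
      calc |v n| * |b ((k : ℤ) - n).natAbs + b (k + n)|
          ≤ |v n| * (Q * (2 * ν ^ n)) :=
            mul_le_mul_of_nonneg_left hB (abs_nonneg _)
        _ = Q * (2 * |v n| * ν ^ n) := by ring
  -- sum of the comparison sequence is ≤ 1
  have hsum1 : ∑' n, h' n ≤ 1 := by
    have h0 : h' 0 = 0 := h'lt 0 (Nat.lt_of_lt_of_le Nat.zero_lt_one hm)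
    have hshift : Summable fun n : ℕ => 2 * (|v (n + 1)| * ν ^ (n + 1)) :=
      ((summable_nat_add_iff 1).mpr hv).mul_left 2
    have : ∑' n, h' n = ∑' n, h' (n + 1) := by
      rw [Summable.tsum_eq_zero_add hsh', h0, zero_add]
    rw [this]
    have hle : ∑' n, h' (n + 1) ≤ ∑' n, 2 * (|v (n + 1)| * ν ^ (n + 1)) := by
      exact Summable.tsum_le_tsum (fun n => h'le (n + 1)) ((summable_nat_add_iff 1).mpr hsh') hshift
    refine le_trans hle ?_
    rw [tsum_mul_left]
    have : |v 0| + 2 * ∑' n : ℕ, |v (n + 1)| * ν ^ (n + 1) ≤ 1 := hv1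
    have h0nn : 0 ≤ |v 0| := abs_nonneg _
    linarith
  -- conclude
  rw [hconv]
  have habs1 : |∑' n, g n| ≤ ∑' n, |g n| := by
    have h1 : Summable fun n : ℕ => ‖g n‖ := by simpa [Real.norm_eq_abs] using hg.abs
    calc |∑' n, g n| = ‖∑' n, g n‖ := (Real.norm_eq_abs _).symm
      _ ≤ ∑' n, ‖g n‖ := norm_tsum_le_tsum_norm h1
      _ = ∑' n, |g n| := by simp [Real.norm_eq_abs]
  calc |∑' n, g n| ≤ ∑' n, |g n| := habs1
    _ ≤ ∑' n, Q * h' n := Summable.tsum_le_tsum hpt hg.abs (hsh'.mul_left Q)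
    _ = Q * ∑' n, h' n := tsum_mul_left
    _ ≤ Q * 1 := mul_le_mul_of_nonneg_left hsum1 hQnn
    _ = Q := mul_one Q
end
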